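/- arXiv:2505.20807 — 3 statements merged into one kernel-verified Lean document; each statement's English description precedes it below -/
import Mathlib

section
/- Let H ∈ ℝ^{N×d}, {C_1,…,C_n} a partition of {1,…,N} with centroids H'_i, c_min = min_i |C_i|, μ_org the mean of rows of H, and Σ_org, Σ_syn the empirical covariances of the rows of H and of the centroids respectively. Then tr(Σ_syn) ≤ (N/(n·c_min)) · tr(Σ_org). -/
/-!
Only the diagonal of the covariances matters, and coordinatewise everything follows from the
Huygens–Steiner identity `∑ (x - c)² = ∑ (x - x̄)² + #s (x̄ - c)²`. It first lets the mean of the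
centroids be replaced by `μ_org`, and then bounds each cluster's contribution
`|C_i| (H'_i - μ_org)²` by its within-cluster sum of squares about `μ_org`; summing over the
partition and using `c_min ≤ |C_i|` gives `c_min ∑ᵢ (H'_i - μ_org)² ≤ ∑ⱼ (H_j - μ_org)²`.
-/

open Finset Function
open scoped BigOperators

namespace Finset

variable {ι κ : Type*}

theorem sum_sq_sub_eq_sum_sq_sub_expect_add (s : Finset ι) (x : ι → ℝ) (c : ℝ) :
    ∑ i ∈ s, (x i - c) ^ 2
      = ∑ i ∈ s, (x i - 𝔼 j ∈ s, x j) ^ 2 + #s * (𝔼 j ∈ s, x j - c) ^ 2 := by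
  set m := 𝔼 j ∈ s, x j
  have h_centered : ∑ i ∈ s, (x i - m) = 0 := by
    rw [sum_sub_distrib, ← card_mul_expect, sum_const, nsmul_eq_mul, sub_self]
  calc ∑ i ∈ s, (x i - c) ^ 2
      = ∑ i ∈ s, ((x i - m) ^ 2 + 2 * (m - c) * (x i - m) + (m - c) ^ 2) :=
        sum_congr rfl fun _ _ => by ring
    _ = ∑ i ∈ s, (x i - m) ^ 2 + #s * (m - c) ^ 2 := by
        rw [sum_add_distrib, sum_add_distrib, ← mul_sum, h_centered, sum_const, nsmul_eq_mul,
          mul_zero, add_zero]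

theorem sum_sq_sub_expect_le (s : Finset ι) (x : ι → ℝ) (c : ℝ) :
    ∑ i ∈ s, (x i - 𝔼 j ∈ s, x j) ^ 2 ≤ ∑ i ∈ s, (x i - c) ^ 2 := by
  rw [sum_sq_sub_eq_sum_sq_sub_expect_add s x c]
  exact le_add_of_nonneg_right (by positivity)

theorem card_mul_sq_expect_sub_le (s : Finset ι) (x : ι → ℝ) (c : ℝ) :
    #s * (𝔼 j ∈ s, x j - c) ^ 2 ≤ ∑ i ∈ s, (x i - c) ^ 2 := by
  rw [sum_sq_sub_eq_sum_sq_sub_expect_add s x c]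
  exact le_add_of_nonneg_left (sum_nonneg fun _ _ => sq_nonneg _)

theorem sum_sum_eq_sum_of_pairwise_disjoint {M : Type*} [AddCommMonoid M] [Fintype ι]
    [Fintype κ] (C : κ → Finset ι) (hdisj : Pairwise (Disjoint on C))
    (hcover : ∀ j, ∃ i, j ∈ C i) (f : ι → M) :
    ∑ i, ∑ j ∈ C i, f j = ∑ j, f j := by
  classical
  have h_union : univ.biUnion C = univ :=
    eq_univ_of_forall fun j => mem_biUnion.mpr <| (hcover j).imp fun i hi => ⟨mem_univ i, hi⟩
  rw [← sum_biUnion fun a _ b _ hab => hdisj hab, h_union]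

theorem mul_sum_sq_expect_sub_le_sum_sq_sub [Fintype ι] [Fintype κ] (C : κ → Finset ι)
    (hdisj : Pairwise (Disjoint on C)) (hcover : ∀ j, ∃ i, j ∈ C i) {m : ℕ}
    (hm : ∀ i, m ≤ #(C i)) (x : ι → ℝ) (c : ℝ) :
    m * ∑ i, (𝔼 j ∈ C i, x j - c) ^ 2 ≤ ∑ j, (x j - c) ^ 2 :=
  calc m * ∑ i, (𝔼 j ∈ C i, x j - c) ^ 2
      = ∑ i, (m : ℝ) * (𝔼 j ∈ C i, x j - c) ^ 2 := mul_sum _ _ _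
    _ ≤ ∑ i, (#(C i) : ℝ) * (𝔼 j ∈ C i, x j - c) ^ 2 := by gcongr with i; exact hm i
    _ ≤ ∑ i, ∑ j ∈ C i, (x j - c) ^ 2 :=
        sum_le_sum fun i _ => card_mul_sq_expect_sub_le (C i) x c
    _ = ∑ j, (x j - c) ^ 2 := sum_sum_eq_sum_of_pairwise_disjoint C hdisj hcover _

end Finset

theorem Matrix.trace_eq_mul_sum_sq {m ι : Type*} [Fintype m] [Fintype ι] (S : Matrix m m ℝ)
    (r : ℝ) (X : ι → m → ℝ) (hS : ∀ a b, S a b = r * ∑ j, X j a * X j b) :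
    S.trace = r * ∑ a, ∑ j, X j a ^ 2 := by
  simp only [Matrix.trace, Matrix.diag_apply, hS, mul_sum, sq]

theorem syn_trace_bound_general
    (N n d : ℕ) (hN : 0 < N)
    (H : Fin N → Fin d → ℝ)
    (C : Fin n → Finset (Fin N))
    (hne : ∀ i, (C i).Nonempty)
    (hdisj : ∀ i i', i ≠ i' → Disjoint (C i) (C i'))
    (hcover : ∀ j, ∃ i, j ∈ C i)
    (H' : Fin n → Fin d → ℝ)
    (hH' : ∀ i k, H' i k = (∑ j ∈ C i, H j k) / (C i).card)
    (μorg μsyn : Fin d → ℝ)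
    (hμs : ∀ k, μsyn k = (∑ i, H' i k) / n)
    (cmin : ℕ)
    (hcmin : IsLeast (Set.range fun i => (C i).card) cmin)
    (Sorg Ssyn : Matrix (Fin d) (Fin d) ℝ)
    (hSorg : ∀ a b, Sorg a b = (1 / (N : ℝ)) * ∑ j, (H j a - μorg a) * (H j b - μorg b))
    (hSsyn : ∀ a b, Ssyn a b = (1 / (n : ℝ)) * ∑ i, (H' i a - μsyn a) * (H' i b - μsyn b)) :
    Ssyn.trace ≤ ((N : ℝ) / ((n : ℝ) * (cmin : ℝ))) * Sorg.trace := by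
  obtain ⟨⟨i₀, rfl⟩, hcmin_le⟩ := hcmin
  have hcmin_pos : (0 : ℝ) < #(C i₀) := by exact_mod_cast (hne i₀).card_pos
  have hH'_expect : ∀ i k, H' i k = 𝔼 j ∈ C i, H j k := fun i k => by
    rw [hH', expect_eq_sum_div_card]
  have hμs_expect : ∀ k, μsyn k = 𝔼 i, H' i k := fun k => by
    rw [hμs, Fintype.expect_eq_sum_div_card, Fintype.card_fin]
  have h_coord : ∀ k, #(C i₀) * ∑ i, (H' i k - μsyn k) ^ 2 ≤ ∑ j, (H j k - μorg k) ^ 2 :=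
    fun k => calc
      _ ≤ #(C i₀) * ∑ i, (H' i k - μorg k) ^ 2 := by
          refine mul_le_mul_of_nonneg_left ?_ hcmin_pos.le
          simpa only [hμs_expect] using sum_sq_sub_expect_le univ (H' · k) (μorg k)
      _ ≤ _ := by
          simpa only [hH'_expect] using mul_sum_sq_expect_sub_le_sum_sq_sub C hdisj hcover
            (fun i => hcmin_le ⟨i, rfl⟩) (H · k) (μorg k)
  have h_sum : #(C i₀) * ∑ k, ∑ i, (H' i k - μsyn k) ^ 2 ≤ ∑ k, ∑ j, (H j k - μorg k) ^ 2 := by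
    rw [mul_sum]; exact sum_le_sum fun k _ => h_coord k
  rw [Matrix.trace_eq_mul_sum_sq Ssyn _ (fun i k => H' i k - μsyn k) hSsyn,
    Matrix.trace_eq_mul_sum_sq Sorg _ (fun j k => H j k - μorg k) hSorg]
  have hN' : (N : ℝ) ≠ 0 := by positivity
  rw [show (N : ℝ) / (n * #(C i₀)) * (1 / N * ∑ k, ∑ j, (H j k - μorg k) ^ 2)
      = 1 / n * ((∑ k, ∑ j, (H j k - μorg k) ^ 2) / #(C i₀)) by field_simp]
  gcongr
  rwa [le_div_iff₀ hcmin_pos, mul_comm]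

/-- `tr(Σ_syn) ≤ (N/(n·c_min))·tr(Σ_org)` where `c_min` is the minimum cluster size. -/
theorem syn_trace_bound
    (N n d : ℕ) (hN : 0 < N) (hn : 0 < n)
    (H : Fin N → Fin d → ℝ)
    (C : Fin n → Finset (Fin N))
    (hne : ∀ i, (C i).Nonempty)
    (hdisj : ∀ i i', i ≠ i' → Disjoint (C i) (C i'))
    (hcover : ∀ j, ∃ i, j ∈ C i)
    (H' : Fin n → Fin d → ℝ)
    (hH' : ∀ i k, H' i k = (∑ j ∈ C i, H j k) / (C i).card)
    (μorg μsyn : Fin d → ℝ)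
    (hμo : ∀ k, μorg k = (∑ j, H j k) / N)
    (hμs : ∀ k, μsyn k = (∑ i, H' i k) / n)
    (cmin : ℕ)
    (hcmin : IsLeast (Set.range fun i => (C i).card) cmin)
    (Sorg Ssyn : Matrix (Fin d) (Fin d) ℝ)
    (hSorg : ∀ a b, Sorg a b = (1 / (N : ℝ)) * ∑ j, (H j a - μorg a) * (H j b - μorg b))
    (hSsyn : ∀ a b, Ssyn a b = (1 / (n : ℝ)) * ∑ i, (H' i a - μsyn a) * (H' i b - μsyn b)) :
    Ssyn.trace ≤ ((N : ℝ) / ((n : ℝ) * (cmin : ℝ))) * Sorg.trace :=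
  syn_trace_bound_general N n d hN H C hne hdisj hcover H' hH' μorg μsyn hμs cmin hcmin Sorg Ssyn
    hSorg hSsyn
end

section
/- Let H ∈ ℝ^{N×d} with cluster partition {C_1,…,C_n}, centroids H'_i, c_max = max_i |C_i|, c_min = min_i |C_i|, means μ_org, μ_syn, and empirical covariances Σ_org, Σ_syn (of rows of H and of centroids, respectively). Then tr(Σ_org) + tr(Σ_syn) ≤ (1/N) Σ_{i=1}^n Σ_{j∈C_i} ‖H_j − H'_i‖₂² + (n·c_max/N)·‖μ_org − μ_syn‖₂² + (c_max/c_min + N/(n·c_min))·tr(Σ_org). -/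
/-!
The mean-shift and within-cluster terms are nonnegative and can be dropped. Since
`c_max / c_min ≥ 1`, `tr Σ_org` is absorbed by the first coefficient. For `tr Σ_syn`: the mean
`μ_syn` of the centroids minimises their sum of squared deviations, so replacing it by `μ_org`
only increases it; by Jensen, `‖H'_i - μ_org‖² ≤ (1/|C_i|) Σ_{j ∈ C_i} ‖H_j - μ_org‖²`; and since
the clusters are disjoint with `|C_i| ≥ c_min`, summing over `i` gives
`n · tr Σ_syn ≤ (N / c_min) · tr Σ_org`.
-/

open Finset

namespace Finset

variable {ι : Type*}

theorem sum_sq_sub_avg_le (s : Finset ι) (y : ι → ℝ) (a : ℝ) :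
    ∑ i ∈ s, (y i - (∑ j ∈ s, y j) / #s) ^ 2 ≤ ∑ i ∈ s, (y i - a) ^ 2 := by
  obtain rfl | hs := s.eq_empty_or_nonempty
  · simp
  set μ := (∑ j ∈ s, y j) / #s
  have hsum : ∑ i ∈ s, (y i - μ) = 0 := by
    rw [sum_sub_distrib, sum_const, nsmul_eq_mul, mul_div_cancel₀ _ (by positivity), sub_self]
  have hsplit : ∑ i ∈ s, (y i - a) ^ 2
      = ∑ i ∈ s, (y i - μ) ^ 2 + 2 * (μ - a) * ∑ i ∈ s, (y i - μ) + #s * (μ - a) ^ 2 := by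
    rw [mul_sum, ← sum_add_distrib, ← nsmul_eq_mul, ← sum_const, ← sum_add_distrib]
    exact sum_congr rfl fun i _ => by ring
  rw [hsplit, hsum]
  nlinarith [sq_nonneg (μ - a)]

theorem sq_avg_sub_le_avg_sq_sub {s : Finset ι} (hs : s.Nonempty) (y : ι → ℝ) (a : ℝ) :
    ((∑ j ∈ s, y j) / #s - a) ^ 2 ≤ (∑ j ∈ s, (y j - a) ^ 2) / #s := by
  have h : (∑ j ∈ s, y j) / #s - a = (∑ j ∈ s, (y j - a)) / #s := by
    rw [sum_sub_distrib, sum_const, nsmul_eq_mul, sub_div, mul_div_cancel_left₀ _ (by positivity)]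
  rw [h]
  exact sum_div_card_sq_le_sum_sq_div_card

theorem sum_sum_div_card_le {κ : Type*} [Fintype ι] (t : Finset κ) (C : κ → Finset ι)
    (hC : (t : Set κ).PairwiseDisjoint C) {f : ι → ℝ} (hf : 0 ≤ f) {c : ℝ} (hc : 0 < c)
    (hcard : ∀ i ∈ t, c ≤ #(C i)) :
    ∑ i ∈ t, (∑ j ∈ C i, f j) / #(C i) ≤ (∑ j, f j) / c :=
  calc ∑ i ∈ t, (∑ j ∈ C i, f j) / #(C i)
      ≤ ∑ i ∈ t, (∑ j ∈ C i, f j) / c := by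
        gcongr with i hi
        · exact sum_nonneg fun j _ => hf j
        · exact hcard i hi
    _ = (∑ j ∈ t.disjiUnion C hC, f j) / c := by rw [sum_disjiUnion, sum_div]
    _ ≤ (∑ j, f j) / c :=
        div_le_div_of_nonneg_right
          (sum_le_sum_of_subset_of_nonneg (subset_univ _) fun j _ _ => hf j) hc.le

end Finset

theorem Matrix.trace_eq_mul_sum_sum_sq {ι κ : Type*} [Fintype ι] [Fintype κ] {S : Matrix κ κ ℝ}
    {c : ℝ} {x : ι → κ → ℝ} {m : κ → ℝ}
    (hS : ∀ a b, S a b = c * ∑ j, (x j a - m a) * (x j b - m b)) :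
    S.trace = c * ∑ j, ∑ k, (x j k - m k) ^ 2 := by
  simp only [Matrix.trace, Matrix.diag, hS, ← sq]
  rw [← mul_sum, sum_comm]

section Centroids

variable {ι κ δ : Type*} [Fintype ι] [Fintype κ] [Fintype δ]

theorem sum_sum_sq_sub_mean_le {y : ι → δ → ℝ} {μ : δ → ℝ}
    (hμ : ∀ k, μ k = (∑ i, y i k) / Fintype.card ι) (a : δ → ℝ) :
    ∑ i, ∑ k, (y i k - μ k) ^ 2 ≤ ∑ i, ∑ k, (y i k - a k) ^ 2 := by
  calc ∑ i, ∑ k, (y i k - μ k) ^ 2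
      = ∑ k, ∑ i, (y i k - (∑ j, y j k) / #univ) ^ 2 := by
        simp only [hμ, card_univ]
        exact sum_comm
    _ ≤ ∑ k, ∑ i, (y i k - a k) ^ 2 := sum_le_sum fun k _ => sum_sq_sub_avg_le _ _ _
    _ = ∑ i, ∑ k, (y i k - a k) ^ 2 := sum_comm

theorem sum_sum_sq_centroid_sub_le {C : κ → Finset ι}
    (hC : Pairwise fun i i' => Disjoint (C i) (C i')) {c : ℝ} (hc : 0 < c)
    (hcard : ∀ i, c ≤ #(C i)) {x : ι → δ → ℝ} {x' : κ → δ → ℝ}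
    (hx' : ∀ i k, x' i k = (∑ j ∈ C i, x j k) / #(C i)) (m : δ → ℝ) :
    ∑ i, ∑ k, (x' i k - m k) ^ 2 ≤ (∑ j, ∑ k, (x j k - m k) ^ 2) / c :=
  calc ∑ i, ∑ k, (x' i k - m k) ^ 2
      ≤ ∑ i, (∑ j ∈ C i, ∑ k, (x j k - m k) ^ 2) / #(C i) := by
        refine sum_le_sum fun i _ => ?_
        have hne : (C i).Nonempty := card_pos.1 (by exact_mod_cast hc.trans_le (hcard i))
        rw [sum_comm, sum_div]
        refine sum_le_sum fun k _ => ?_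
        rw [hx']
        exact sq_avg_sub_le_avg_sq_sub hne _ _
    _ ≤ (∑ j, ∑ k, (x j k - m k) ^ 2) / c :=
        sum_sum_div_card_le _ C (fun i _ i' _ h => hC h)
          (fun j => sum_nonneg fun k _ => sq_nonneg _) hc fun i _ => hcard i

end Centroids

theorem combined_trace_bound_general
    (N n d : ℕ) (hN : 0 < N)
    (H : Fin N → Fin d → ℝ)
    (C : Fin n → Finset (Fin N))
    (hne : ∀ i, (C i).Nonempty)
    (hdisj : ∀ i i', i ≠ i' → Disjoint (C i) (C i'))
    (H' : Fin n → Fin d → ℝ)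
    (hH' : ∀ i k, H' i k = (∑ j ∈ C i, H j k) / (C i).card)
    (μorg μsyn : Fin d → ℝ)
    (hμs : ∀ k, μsyn k = (∑ i, H' i k) / n)
    (cmin cmax : ℕ)
    (hcmin : IsLeast (Set.range fun i => (C i).card) cmin)
    (hcmax : IsGreatest (Set.range fun i => (C i).card) cmax)
    (Sorg Ssyn : Matrix (Fin d) (Fin d) ℝ)
    (hSorg : ∀ a b, Sorg a b = (1 / (N : ℝ)) * ∑ j, (H j a - μorg a) * (H j b - μorg b))
    (hSsyn : ∀ a b, Ssyn a b = (1 / (n : ℝ)) * ∑ i, (H' i a - μsyn a) * (H' i b - μsyn b)) :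
    Sorg.trace + Ssyn.trace
      ≤ (1 / (N : ℝ)) * ∑ i, ∑ j ∈ C i, ∑ k, (H j k - H' i k) ^ 2
        + ((n : ℝ) * (cmax : ℝ) / N) * ∑ k, (μorg k - μsyn k) ^ 2
        + ((cmax : ℝ) / (cmin : ℝ) + (N : ℝ) / ((n : ℝ) * (cmin : ℝ))) * Sorg.trace := by
  obtain ⟨i₀, hi₀⟩ := hcmin.1
  have hcmin_pos : (0 : ℝ) < cmin := by rw [← hi₀]; exact_mod_cast (hne i₀).card_pos
  have hcmin_le : ∀ i, (cmin : ℝ) ≤ #(C i) := fun i => by exact_mod_cast hcmin.2 ⟨i, rfl⟩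
  have hcmin_le_cmax : (cmin : ℝ) ≤ cmax := by exact_mod_cast hcmax.2 ⟨i₀, hi₀⟩
  rw [Matrix.trace_eq_mul_sum_sum_sq hSorg, Matrix.trace_eq_mul_sum_sum_sq hSsyn]
  have hsyn : 1 / (n : ℝ) * ∑ i, ∑ k, (H' i k - μsyn k) ^ 2
      ≤ N / (n * cmin) * (1 / N * ∑ j, ∑ k, (H j k - μorg k) ^ 2) :=
    calc 1 / (n : ℝ) * ∑ i, ∑ k, (H' i k - μsyn k) ^ 2
        ≤ 1 / n * ∑ i, ∑ k, (H' i k - μorg k) ^ 2 := by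
          gcongr _ * ?_
          exact sum_sum_sq_sub_mean_le (fun k => by rw [hμs, Fintype.card_fin]) μorg
      _ ≤ 1 / n * ((∑ j, ∑ k, (H j k - μorg k) ^ 2) / cmin) := by
          gcongr _ * ?_
          exact sum_sum_sq_centroid_sub_le (fun i i' h => hdisj i i' h) hcmin_pos hcmin_le hH'
            μorg
      _ = N / (n * cmin) * (1 / N * ∑ j, ∑ k, (H j k - μorg k) ^ 2) := by
          field_simp
  have horg : 1 / (N : ℝ) * ∑ j, ∑ k, (H j k - μorg k) ^ 2
      ≤ cmax / cmin * (1 / N * ∑ j, ∑ k, (H j k - μorg k) ^ 2) :=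
    le_mul_of_one_le_left (by positivity) ((one_le_div hcmin_pos).2 hcmin_le_cmax)
  have hwcss : 0 ≤ 1 / (N : ℝ) * ∑ i, ∑ j ∈ C i, ∑ k, (H j k - H' i k) ^ 2 := by positivity
  have hshift : 0 ≤ (n : ℝ) * cmax / N * ∑ k, (μorg k - μsyn k) ^ 2 := by positivity
  linarith

/-- combined trace bound:
`tr(Σ_org) + tr(Σ_syn) ≤ WCSS/N + (n·c_max/N)·‖μ_org − μ_syn‖²
  + (c_max/c_min + N/(n·c_min))·tr(Σ_org)`. -/
theorem combined_trace_bound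
    (N n d : ℕ) (hN : 0 < N) (hn : 0 < n)
    (H : Fin N → Fin d → ℝ)
    (C : Fin n → Finset (Fin N))
    (hne : ∀ i, (C i).Nonempty)
    (hdisj : ∀ i i', i ≠ i' → Disjoint (C i) (C i'))
    (hcover : ∀ j, ∃ i, j ∈ C i)
    (H' : Fin n → Fin d → ℝ)
    (hH' : ∀ i k, H' i k = (∑ j ∈ C i, H j k) / (C i).card)
    (μorg μsyn : Fin d → ℝ)
    (hμo : ∀ k, μorg k = (∑ j, H j k) / N)
    (hμs : ∀ k, μsyn k = (∑ i, H' i k) / n)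
    (cmin cmax : ℕ)
    (hcmin : IsLeast (Set.range fun i => (C i).card) cmin)
    (hcmax : IsGreatest (Set.range fun i => (C i).card) cmax)
    (Sorg Ssyn : Matrix (Fin d) (Fin d) ℝ)
    (hSorg : ∀ a b, Sorg a b = (1 / (N : ℝ)) * ∑ j, (H j a - μorg a) * (H j b - μorg b))
    (hSsyn : ∀ a b, Ssyn a b = (1 / (n : ℝ)) * ∑ i, (H' i a - μsyn a) * (H' i b - μsyn b)) :
    Sorg.trace + Ssyn.trace
      ≤ (1 / (N : ℝ)) * ∑ i, ∑ j ∈ C i, ∑ k, (H j k - H' i k) ^ 2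
        + ((n : ℝ) * (cmax : ℝ) / N) * ∑ k, (μorg k - μsyn k) ^ 2
        + ((cmax : ℝ) / (cmin : ℝ) + (N : ℝ) / ((n : ℝ) * (cmin : ℝ))) * Sorg.trace :=
  combined_trace_bound_general N n d hN H C hne hdisj H' hH' μorg μsyn hμs cmin cmax hcmin hcmax
    Sorg Ssyn hSorg hSsyn
end

section
/- Let G̃ be a weighted graph on nodes of G where each edge (v_i,v_j) has weight cos(H_i,H_j) ∈ (0,1], and let d̃(v_i) = Σ_{ℓ∈N(v_i)} cos(H_i,H_ℓ) > 0 be the weighted degrees. Then for each edge, the effective resistance r(v_i,v_j) of the weighted graph satisfies (1/2)(1/d̃(v_i) + 1/d̃(v_j)) ≤ r(v_i,v_j) ≤ (1/(1−λ₂))·(1/d̃(v_i) + 1/d̃(v_j)), where λ₂ < 1 is the second largest eigenvalue of the normalized adjacency matrix of G̃. -/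
/-!
Let `u` solve `L u = e_i - e_j`; the Penrose identities give `u = L⁺ (e_i - e_j)` because
`e_i - e_j` is orthogonal to `ker L` (an edge has positive weight), so `r = (e_i - e_j) ⬝ u = uᵀ L u`.

For the lower bound, `0 ≤ (u - z)ᵀ L (u - z)` gives `2 zᵀ (e_i - e_j) - zᵀ L z ≤ r` for every `z`;
the test vector `z = (e_i / d_i - e_j / d_j) / 2` yields `s / 2`, where `s = 1 / d_i + 1 / d_j`,
because `2 w_ij ≤ d_i + d_j`.

For the upper bound, shift `u` by a constant (changing neither `L u` nor `r`) so that
`∑ d_a u_a = 0`. Then `D^{1/2} u ⊥ D^{1/2} 𝟙`, and the spectral hypothesis on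
`D^{-1/2} W D^{-1/2}` gives `(1 - λ₂) ∑ d_a u_a² ≤ uᵀ L u = r`, while Cauchy–Schwarz gives
`r² = (u_i - u_j)² ≤ s ∑ d_a u_a²`.
-/

open Finset Matrix

theorem Matrix.mulVec_mulVec_eq_of_orthogonal_ker {n R : Type*} [Fintype n]
    [CommRing R] [LinearOrder R] [IsStrictOrderedRing R] {L Lp : Matrix n n R}
    (hL : Lᵀ = L) (hLp1 : L * Lp * L = L) (hLp3 : (L * Lp)ᵀ = L * Lp) {x : n → R}
    (hx : ∀ v, L *ᵥ v = 0 → x ⬝ᵥ v = 0) : L *ᵥ (Lp *ᵥ x) = x := by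
  have hLLLp : L * (L * Lp) = L := by
    conv_lhs => rw [← hLp3, transpose_mul, hL, ← Matrix.mul_assoc]
    simpa [transpose_mul, hL, Matrix.mul_assoc] using congrArg transpose hLp1
  set q := x - (L * Lp) *ᵥ x
  have hLq : L *ᵥ q = 0 := by simp [q, mulVec_sub, mulVec_mulVec, hLLLp]
  have hPq : (L * Lp) *ᵥ q = 0 := by
    simp [q, mulVec_sub, mulVec_mulVec, ← Matrix.mul_assoc, hLp1]
  have hqq : q ⬝ᵥ q = 0 := by
    calc q ⬝ᵥ q = x ⬝ᵥ q - x ⬝ᵥ (L * Lp)ᵀ *ᵥ q := by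
          rw [sub_dotProduct, dotProduct_transpose_mulVec, dotProduct_comm q]
      _ = 0 := by rw [hLp3, hPq, hx q hLq, dotProduct_zero, sub_zero]
  rw [mulVec_mulVec]
  exact (sub_eq_zero.mp (dotProduct_self_eq_zero.mp hqq)).symm

theorem Matrix.two_mul_dotProduct_sub_le_dotProduct {n R : Type*} [Fintype n]
    [CommRing R] [LinearOrder R] [IsStrictOrderedRing R] {L : Matrix n n R}
    (hL : Lᵀ = L) (hpsd : ∀ v, 0 ≤ v ⬝ᵥ L *ᵥ v) {u x : n → R} (hu : L *ᵥ u = x) (z : n → R) :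
    2 * (z ⬝ᵥ x) - z ⬝ᵥ L *ᵥ z ≤ u ⬝ᵥ x := by
  have hsymm : u ⬝ᵥ L *ᵥ z = z ⬝ᵥ x := by
    rw [← hu, ← dotProduct_transpose_mulVec, hL]
  have := hpsd (u - z)
  simp only [mulVec_sub, dotProduct_sub, sub_dotProduct, hu, hsymm] at this
  linarith

theorem Matrix.single_sub_single_dotProduct_mulVec {n R : Type*} [Fintype n] [DecidableEq n]
    [CommRing R] (M : Matrix n n R) (i j : n) (a b : R) :
    (Pi.single i a - Pi.single j b) ⬝ᵥ M *ᵥ (Pi.single i a - Pi.single j b) =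
      a * a * M i i - a * b * (M i j + M j i) + b * b * M j j := by
  simp only [sub_dotProduct, single_dotProduct, mulVec, dotProduct_sub, dotProduct_single]
  ring

theorem sq_sub_le_inv_add_inv_mul_sum {ι : Type*} [Fintype ι] [DecidableEq ι] {d : ι → ℝ}
    (hd : ∀ a, 0 < d a) {i j : ι} (hij : i ≠ j) (u : ι → ℝ) :
    (u i - u j) ^ 2 ≤ (1 / d i + 1 / d j) * ∑ a, d a * u a ^ 2 := by
  have hdi := hd i
  have hdj := hd j
  have hpair : (u i - u j) ^ 2 ≤ (1 / d i + 1 / d j) * (d i * u i ^ 2 + d j * u j ^ 2) := by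
    rw [← sub_nonneg]
    have : (1 / d i + 1 / d j) * (d i * u i ^ 2 + d j * u j ^ 2) - (u i - u j) ^ 2 =
        (d i * u i + d j * u j) ^ 2 / (d i * d j) := by
      field_simp
      ring
    rw [this]
    positivity
  have hsum : d i * u i ^ 2 + d j * u j ^ 2 ≤ ∑ a, d a * u a ^ 2 := by
    rw [← sum_pair (f := fun a => d a * u a ^ 2) hij]
    exact sum_le_sum_of_subset_of_nonneg (subset_univ _)
      fun a _ _ => mul_nonneg (hd a).le (sq_nonneg _)
  exact hpair.trans (by gcongr)

section WeightedLaplacian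

variable {V : Type*} [Fintype V] [DecidableEq V] (W : Matrix V V ℝ)

def weightedLaplacian : Matrix V V ℝ := diagonal (fun a => ∑ b, W a b) - W

theorem weightedLaplacian_apply (a b : V) :
    weightedLaplacian W a b = (if a = b then ∑ c, W a c else 0) - W a b := by
  simp [weightedLaplacian, diagonal_apply]

theorem weightedLaplacian_mulVec_const (c : ℝ) : weightedLaplacian W *ᵥ (fun _ => c) = 0 := by
  ext a
  simp only [mulVec, dotProduct, weightedLaplacian_apply, ← sum_mul, sum_sub_distrib, sum_ite_eq,
    mem_univ, if_true, sub_self, zero_mul, Pi.zero_apply]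

theorem dotProduct_weightedLaplacian_mulVec (v : V → ℝ) :
    v ⬝ᵥ weightedLaplacian W *ᵥ v =
      ∑ a, (∑ b, W a b) * v a ^ 2 - ∑ a, ∑ b, W a b * (v a * v b) := by
  have hterm : ∀ a b, v a * (weightedLaplacian W a b * v b) =
      (if a = b then (∑ c, W a c) * v a ^ 2 else 0) - W a b * (v a * v b) := by
    intro a b
    rw [weightedLaplacian_apply]
    split_ifs with h
    · subst h; ring
    · ring
  simp only [dotProduct, mulVec, mul_sum, hterm, sum_sub_distrib, sum_ite_eq, mem_univ, if_true]

variable {W}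

theorem weightedLaplacian_transpose (hW : ∀ a b, W a b = W b a) :
    (weightedLaplacian W)ᵀ = weightedLaplacian W := by
  ext a b
  rw [transpose_apply, weightedLaplacian_apply, weightedLaplacian_apply, hW b a]
  by_cases h : a = b
  · subst h; rfl
  · rw [if_neg h, if_neg (Ne.symm h)]

theorem two_mul_dotProduct_weightedLaplacian_mulVec (hW : ∀ a b, W a b = W b a) (v : V → ℝ) :
    2 * (v ⬝ᵥ weightedLaplacian W *ᵥ v) = ∑ a, ∑ b, W a b * (v a - v b) ^ 2 := by
  have hswap : ∑ a, ∑ b, W a b * v b ^ 2 = ∑ a, (∑ b, W a b) * v a ^ 2 := by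
    rw [sum_comm]
    simp only [sum_mul, hW]
  have hexpand : ∑ a, ∑ b, W a b * (v a - v b) ^ 2 = ∑ a, (∑ b, W a b) * v a ^ 2 +
      ∑ a, ∑ b, W a b * v b ^ 2 - 2 * ∑ a, ∑ b, W a b * (v a * v b) := by
    simp only [sum_mul, mul_sum, ← sum_add_distrib, ← sum_sub_distrib]
    exact sum_congr rfl fun a _ => sum_congr rfl fun b _ => by ring
  rw [hexpand, hswap, dotProduct_weightedLaplacian_mulVec]
  ring

theorem dotProduct_weightedLaplacian_mulVec_nonneg (hW : ∀ a b, W a b = W b a)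
    (hW₀ : ∀ a b, 0 ≤ W a b) (v : V → ℝ) : 0 ≤ v ⬝ᵥ weightedLaplacian W *ᵥ v := by
  have := two_mul_dotProduct_weightedLaplacian_mulVec hW v
  have : 0 ≤ ∑ a, ∑ b, W a b * (v a - v b) ^ 2 :=
    sum_nonneg fun a _ => sum_nonneg fun b _ => mul_nonneg (hW₀ a b) (sq_nonneg _)
  linarith

theorem eq_of_weightedLaplacian_mulVec_eq_zero (hW : ∀ a b, W a b = W b a)
    (hW₀ : ∀ a b, 0 ≤ W a b) {i j : V} (hij : 0 < W i j) {v : V → ℝ}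
    (hv : weightedLaplacian W *ᵥ v = 0) : v i = v j := by
  have hterm_nonneg : ∀ a b, 0 ≤ W a b * (v a - v b) ^ 2 :=
    fun a b => mul_nonneg (hW₀ a b) (sq_nonneg _)
  have hterm : W i j * (v i - v j) ^ 2 ≤ 0 :=
    calc W i j * (v i - v j) ^ 2 ≤ ∑ b, W i b * (v i - v b) ^ 2 :=
          single_le_sum (fun b _ => hterm_nonneg i b) (mem_univ j)
      _ ≤ ∑ a, ∑ b, W a b * (v a - v b) ^ 2 :=
          single_le_sum (f := fun a => ∑ b, W a b * (v a - v b) ^ 2)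
            (fun a _ => sum_nonneg fun b _ => hterm_nonneg a b) (mem_univ i)
      _ = 0 := by rw [← two_mul_dotProduct_weightedLaplacian_mulVec hW, hv, dotProduct_zero,
                    mul_zero]
  have := le_antisymm (nonpos_of_mul_nonpos_right hterm hij) (sq_nonneg _)
  linarith [pow_eq_zero_iff two_ne_zero |>.mp this]

end WeightedLaplacian

section Resistance

variable {V : Type*} [Fintype V] [DecidableEq V] {W : Matrix V V ℝ} {d : V → ℝ}

theorem one_sub_mul_sum_le_dotProduct_weightedLaplacian_mulVec
    (hd : ∀ a, d a = ∑ b, W a b) (hd₀ : ∀ a, 0 < d a) {An : Matrix V V ℝ}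
    (hAn : ∀ a b, An a b = W a b / (√(d a) * √(d b))) {lam : ℝ}
    (hlam : ∀ v : V → ℝ, ∑ a, √(d a) * v a = 0 → v ⬝ᵥ An *ᵥ v ≤ lam * ∑ a, v a ^ 2)
    {u : V → ℝ} (hu : ∑ a, d a * u a = 0) :
    (1 - lam) * ∑ a, d a * u a ^ 2 ≤ u ⬝ᵥ weightedLaplacian W *ᵥ u := by
  have hsqrt : ∀ a, √(d a) * √(d a) = d a := fun a => Real.mul_self_sqrt (hd₀ a).le
  have hsqrt₀ : ∀ a, √(d a) ≠ 0 := fun a => (Real.sqrt_pos.mpr (hd₀ a)).ne'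
  set y : V → ℝ := fun a => √(d a) * u a
  have hy_sum : ∑ a, √(d a) * y a = 0 := by
    simpa only [y, ← mul_assoc, hsqrt] using hu
  have hy_sq : ∑ a, y a ^ 2 = ∑ a, d a * u a ^ 2 :=
    sum_congr rfl fun a _ => by rw [mul_pow, sq (√(d a)), hsqrt]
  have hy_An : y ⬝ᵥ An *ᵥ y = ∑ a, ∑ b, W a b * (u a * u b) := by
    simp only [y, dotProduct, mulVec, mul_sum]
    refine sum_congr rfl fun a _ => sum_congr rfl fun b _ => ?_
    rw [hAn]
    field_simp [hsqrt₀ a, hsqrt₀ b]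
  have := hlam y hy_sum
  rw [hy_An, hy_sq] at this
  rw [dotProduct_weightedLaplacian_mulVec]
  simp only [← hd]
  linarith

theorem half_mul_inv_add_inv_le_dotProduct_of_weightedLaplacian_mulVec_eq
    (hW : ∀ a b, W a b = W b a) (hW₀ : ∀ a b, 0 ≤ W a b) (hd : ∀ a, d a = ∑ b, W a b)
    {i j : V} (hij : i ≠ j) (hii : W i i = 0) (hjj : W j j = 0) (hi : 0 < d i) (hj : 0 < d j)
    {u : V → ℝ} (hu : weightedLaplacian W *ᵥ u = Pi.single i 1 - Pi.single j 1) :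
    1 / 2 * (1 / d i + 1 / d j) ≤ (Pi.single i 1 - Pi.single j 1) ⬝ᵥ u := by
  set z : V → ℝ := Pi.single i (1 / (2 * d i)) - Pi.single j (1 / (2 * d j))
  have hzx : z ⬝ᵥ (Pi.single i 1 - Pi.single j 1) = 1 / 2 * (1 / d i + 1 / d j) := by
    simp only [z, sub_dotProduct, dotProduct_sub, single_dotProduct, Pi.single_apply, hij,
      hij.symm, if_true, if_false]
    ring
  have hwi : W i j ≤ d i := hd i ▸ single_le_sum (fun b _ => hW₀ i b) (mem_univ j)
  have hwj : W i j ≤ d j := hd j ▸ hW i j ▸ single_le_sum (fun b _ => hW₀ j b) (mem_univ i)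
  have hzLz : z ⬝ᵥ weightedLaplacian W *ᵥ z ≤ 1 / 2 * (1 / d i + 1 / d j) := by
    rw [single_sub_single_dotProduct_mulVec, weightedLaplacian_apply, weightedLaplacian_apply,
      weightedLaplacian_apply, weightedLaplacian_apply, if_pos rfl, if_pos rfl, if_neg hij,
      if_neg hij.symm, hii, hjj, ← hd, ← hd, ← hW i j]
    field_simp
    nlinarith [mul_pos hi hj]
  have := two_mul_dotProduct_sub_le_dotProduct (weightedLaplacian_transpose hW)
    (dotProduct_weightedLaplacian_mulVec_nonneg hW hW₀) hu z
  rw [dotProduct_comm]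
  linarith

theorem dotProduct_le_div_one_sub_mul_of_weightedLaplacian_mulVec_eq
    (hd : ∀ a, d a = ∑ b, W a b) (hd₀ : ∀ a, 0 < d a) {An : Matrix V V ℝ}
    (hAn : ∀ a b, An a b = W a b / (√(d a) * √(d b))) {lam : ℝ} (hlam₁ : lam < 1)
    (hlam : ∀ v : V → ℝ, ∑ a, √(d a) * v a = 0 → v ⬝ᵥ An *ᵥ v ≤ lam * ∑ a, v a ^ 2)
    {i j : V} (hij : i ≠ j) {u : V → ℝ}
    (hu : weightedLaplacian W *ᵥ u = Pi.single i 1 - Pi.single j 1) :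
    (Pi.single i 1 - Pi.single j 1) ⬝ᵥ u ≤ 1 / (1 - lam) * (1 / d i + 1 / d j) := by
  have hS : 0 < ∑ a, d a := sum_pos (fun a _ => hd₀ a) ⟨i, mem_univ i⟩
  set c := -(∑ a, d a * u a) / ∑ a, d a
  set u' : V → ℝ := u + fun _ => c
  have hu'_centred : ∑ a, d a * u' a = 0 := by
    simp only [u', Pi.add_apply, mul_add, sum_add_distrib, ← sum_mul, c]
    field_simp
    ring
  have hu' : weightedLaplacian W *ᵥ u' = Pi.single i 1 - Pi.single j 1 := by
    rw [mulVec_add, hu, weightedLaplacian_mulVec_const, add_zero]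
  set r := (Pi.single i 1 - Pi.single j 1) ⬝ᵥ u
  have hr : r = u' i - u' j := by
    simp only [r, u', sub_dotProduct, single_dotProduct, Pi.add_apply]
    ring
  have hr_energy : r = u' ⬝ᵥ weightedLaplacian W *ᵥ u' := by
    rw [hu', hr, dotProduct_sub, dotProduct_single, dotProduct_single, mul_one, mul_one]
  have hgap := one_sub_mul_sum_le_dotProduct_weightedLaplacian_mulVec hd hd₀ hAn hlam hu'_centred
  have hcs := sq_sub_le_inv_add_inv_mul_sum hd₀ hij u'
  rw [← hr_energy] at hgap
  rw [← hr] at hcs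
  have hgap₀ : 0 < 1 - lam := sub_pos.mpr hlam₁
  have hs₀ : 0 < 1 / d i + 1 / d j := by have := hd₀ i; have := hd₀ j; positivity
  have hsq : r * (r * (1 - lam)) ≤ r * (1 / d i + 1 / d j) :=
    calc r * (r * (1 - lam)) = (1 - lam) * r ^ 2 := by ring
      _ ≤ (1 - lam) * ((1 / d i + 1 / d j) * ∑ a, d a * u' a ^ 2) := by gcongr
      _ = (1 / d i + 1 / d j) * ((1 - lam) * ∑ a, d a * u' a ^ 2) := by ring
      _ ≤ (1 / d i + 1 / d j) * r := by gcongr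
      _ = r * (1 / d i + 1 / d j) := mul_comm _ _
  rw [div_mul_eq_mul_div, one_mul, le_div_iff₀ hgap₀]
  rcases le_or_gt r 0 with hr₀ | hr₀
  · exact (mul_nonpos_of_nonpos_of_nonneg hr₀ hgap₀.le).trans hs₀.le
  · exact le_of_mul_le_mul_left hsq hr₀

end Resistance

theorem effective_resistance_bounds_general
    (NV : ℕ) (G : SimpleGraph (Fin NV))
    (w : Fin NV → Fin NV → ℝ)
    (hwsymm : ∀ i j, w i j = w j i)
    (hw_edge : ∀ i j, G.Adj i j → 0 < w i j ∧ w i j ≤ 1)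
    (hw_nonedge : ∀ i j, ¬G.Adj i j → w i j = 0)
    (dt : Fin NV → ℝ) (hdt : ∀ i, dt i = ∑ j, w i j)
    (hdtpos : ∀ i, 0 < dt i)
    (L : Matrix (Fin NV) (Fin NV) ℝ)
    (hL : ∀ i j, L i j = (if i = j then dt i else 0) - w i j)
    (Lp : Matrix (Fin NV) (Fin NV) ℝ)
    (hLp1 : L * Lp * L = L)
    (hLp3 : (L * Lp)ᵀ = L * Lp)
    (r : Fin NV → Fin NV → ℝ)
    (hr : ∀ i j, r i j =
      (Pi.single i (1:ℝ) - Pi.single j 1) ⬝ᵥ Lp.mulVec (Pi.single i 1 - Pi.single j 1))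
    (An : Matrix (Fin NV) (Fin NV) ℝ)
    (hAn : ∀ i j, An i j = w i j / (Real.sqrt (dt i) * Real.sqrt (dt j)))
    (lam2 : ℝ) (hlam2lt : lam2 < 1)
    (hlam2 : ∀ v : Fin NV → ℝ,
      (∑ i, Real.sqrt (dt i) * v i = 0) → v ⬝ᵥ An.mulVec v ≤ lam2 * ∑ i, (v i) ^ 2) :
    ∀ i j, G.Adj i j →
      (1 / 2) * (1 / dt i + 1 / dt j) ≤ r i j
      ∧ r i j ≤ (1 / (1 - lam2)) * (1 / dt i + 1 / dt j) := by
  intro i j hij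
  have hw₀ : ∀ a b, 0 ≤ w a b := fun a b => by
    by_cases h : G.Adj a b
    · exact (hw_edge a b h).1.le
    · exact (hw_nonedge a b h).ge
  have hw_diag : ∀ a, w a a = 0 := fun a => hw_nonedge a a G.irrefl
  obtain rfl : L = weightedLaplacian (of w) := by
    ext a b
    simp only [hL, weightedLaplacian_apply, hdt, of_apply]
  have hu : weightedLaplacian (of w) *ᵥ (Lp *ᵥ (Pi.single i 1 - Pi.single j 1)) =
      Pi.single i 1 - Pi.single j 1 :=
    mulVec_mulVec_eq_of_orthogonal_ker (weightedLaplacian_transpose hwsymm) hLp1 hLp3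
      fun v hv => by
        rw [sub_dotProduct, single_dotProduct, single_dotProduct,
          eq_of_weightedLaplacian_mulVec_eq_zero hwsymm hw₀ (hw_edge i j hij).1 hv, sub_self]
  rw [hr]
  exact ⟨half_mul_inv_add_inv_le_dotProduct_of_weightedLaplacian_mulVec_eq hwsymm hw₀ hdt
      (G.ne_of_adj hij) (hw_diag i) (hw_diag j) (hdtpos i) (hdtpos j) hu,
    dotProduct_le_div_one_sub_mul_of_weightedLaplacian_mulVec_eq hdt hdtpos hAn hlam2lt hlam2
      (G.ne_of_adj hij) hu⟩

/-- effective-resistance bounds on a weighted graph with weights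
`cos(H_i,H_j) ∈ (0,1]`: for each edge,
`(1/2)(1/d̃_i + 1/d̃_j) ≤ r(i,j) ≤ (1/(1−λ₂))·(1/d̃_i + 1/d̃_j)`, where `r` is
defined via the Moore–Penrose pseudoinverse of the weighted Laplacian and `λ₂ < 1`
bounds the non-principal spectrum of the normalized adjacency matrix. -/
theorem effective_resistance_bounds
    (NV : ℕ) (G : SimpleGraph (Fin NV)) (hconn : G.Connected)
    (w : Fin NV → Fin NV → ℝ)
    (hwsymm : ∀ i j, w i j = w j i)
    (hw_edge : ∀ i j, G.Adj i j → 0 < w i j ∧ w i j ≤ 1)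
    (hw_nonedge : ∀ i j, ¬G.Adj i j → w i j = 0)
    (dt : Fin NV → ℝ) (hdt : ∀ i, dt i = ∑ j, w i j)
    (hdtpos : ∀ i, 0 < dt i)
    (L : Matrix (Fin NV) (Fin NV) ℝ)
    (hL : ∀ i j, L i j = (if i = j then dt i else 0) - w i j)
    (Lp : Matrix (Fin NV) (Fin NV) ℝ)
    (hLp1 : L * Lp * L = L) (hLp2 : Lp * L * Lp = Lp)
    (hLp3 : (L * Lp)ᵀ = L * Lp) (hLp4 : (Lp * L)ᵀ = Lp * L)
    (r : Fin NV → Fin NV → ℝ)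
    (hr : ∀ i j, r i j =
      (Pi.single i (1:ℝ) - Pi.single j 1) ⬝ᵥ Lp.mulVec (Pi.single i 1 - Pi.single j 1))
    (An : Matrix (Fin NV) (Fin NV) ℝ)
    (hAn : ∀ i j, An i j = w i j / (Real.sqrt (dt i) * Real.sqrt (dt j)))
    (lam2 : ℝ) (hlam2lt : lam2 < 1)
    (hlam2 : ∀ v : Fin NV → ℝ,
      (∑ i, Real.sqrt (dt i) * v i = 0) → v ⬝ᵥ An.mulVec v ≤ lam2 * ∑ i, (v i) ^ 2) :
    ∀ i j, G.Adj i j →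
      (1 / 2) * (1 / dt i + 1 / dt j) ≤ r i j
      ∧ r i j ≤ (1 / (1 - lam2)) * (1 / dt i + 1 / dt j) :=
  effective_resistance_bounds_general NV G w hwsymm hw_edge hw_nonedge dt hdt hdtpos L hL Lp hLp1
    hLp3 r hr An hAn lam2 hlam2lt hlam2
end
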